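/- arXiv:2511.08594 — 4 statements merged into one kernel-verified Lean document; each statement's English description precedes it below -/
import Mathlib

section
/- In the two-outcome setting with population preference probability p ∈ (0,1), Bradley-Terry-optimal reward (σ(r(y)−r(y')) = p), and reference policy q with q(y), q(y') > 0, the SPL-optimal policy π(z) ∝ q(z)^{β/α} exp(r(z)/α) satisfies π(y)/π(y') = (q(y)/q(y'))^{β/α} · (p/(1−p))^{1/α}. -/
/-! The normalising constant cancels in the ratio, so the ratio of the two SPL weights is
`(q y / q y')^(β/α) · exp((r y - r y') / α)`; and a Bradley–Terry-optimal reward gap is the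
log-odds of `p`, i.e. `exp (r y - r y') = p / (1 - p)`. -/

open Real

lemma Real.sigmoid_div_one_sub_sigmoid (x : ℝ) : sigmoid x / (1 - sigmoid x) = exp x := by
  rw [← sigmoid_neg, ← sigmoid_mul_rexp_neg, div_mul_cancel_left₀ (sigmoid_pos x).ne',
    exp_neg, inv_inv]

lemma rpow_mul_exp_div_rpow_mul_exp {q q' : ℝ} (hq : 0 < q) (hq' : 0 < q') (s t r r' : ℝ) :
    q ^ s * exp (r * t) / (q' ^ s * exp (r' * t)) = (q / q') ^ s * exp (r - r') ^ t := by
  rw [div_rpow hq.le hq'.le, ← exp_mul, sub_mul, exp_sub, mul_div_mul_comm]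

theorem stmt_4_general (p α β qy qy' ry ry' : ℝ) (hqy : 0 < qy) (hqy' : 0 < qy')
    (hr : 1 / (1 + Real.exp (-(ry - ry'))) = p) :
    let Z : ℝ := qy ^ (β / α) * Real.exp (ry / α) + qy' ^ (β / α) * Real.exp (ry' / α)
    (qy ^ (β / α) * Real.exp (ry / α) / Z) / (qy' ^ (β / α) * Real.exp (ry' / α) / Z)
      = (qy / qy') ^ (β / α) * (p / (1 - p)) ^ (1 / α) := by
  intro Z
  have hZ : Z ≠ 0 := by positivity
  have hodds : p / (1 - p) = exp (ry - ry') := by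
    rw [← hr, one_div, ← sigmoid_def, sigmoid_div_one_sub_sigmoid]
  simp only [div_eq_mul_one_div ry α, div_eq_mul_one_div ry' α]
  rw [div_div_div_cancel_right₀ hZ, hodds, rpow_mul_exp_div_rpow_mul_exp hqy hqy']

theorem stmt_4 (p α β qy qy' ry ry' : ℝ) (hp : 0 < p) (hp1 : p < 1)
    (hα : 0 < α) (hβ : 0 ≤ β) (hqy : 0 < qy) (hqy' : 0 < qy')
    (hr : 1 / (1 + Real.exp (-(ry - ry'))) = p) :
    let Z : ℝ := qy ^ (β / α) * Real.exp (ry / α) + qy' ^ (β / α) * Real.exp (ry' / α)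
    (qy ^ (β / α) * Real.exp (ry / α) / Z) / (qy' ^ (β / α) * Real.exp (ry' / α) / Z)
      = (qy / qy') ^ (β / α) * (p / (1 - p)) ^ (1 / α) :=
  stmt_4_general p α β qy qy' ry ry' hqy hqy' hr
end

section
/- Let p ∈ (0,1) be a population preference and β ∈ (0,1). With uniform reference policy, the KL-regularized optimal two-outcome policy π(y) = p^{1/β}/(p^{1/β} + (1−p)^{1/β}) satisfies: if p > 1/2 then π(y) > p, and π(y) → 1 as β → 0⁺. -/
/-!
With odds ratio `r = (1 - p) / p`, the policy is `π = (1 + r ^ (1 / β))⁻¹` while `p = (1 + r)⁻¹`.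
A majority preference means `r < 1`, so raising `r` to the power `1 / β > 1` makes it smaller,
and it tends to `0` as `1 / β → ∞`.
-/

open Real Filter

namespace Real

lemma rpow_div_rpow_add_rpow_eq_inv {x y : ℝ} (hx : 0 < x) (hy : 0 ≤ y) (a : ℝ) :
    x ^ a / (x ^ a + y ^ a) = (1 + (y / x) ^ a)⁻¹ := by
  have hxa : 0 < x ^ a := rpow_pos_of_pos hx a
  rw [div_rpow hy hx.le, one_add_div hxa.ne', inv_div]

lemma div_add_lt_rpow_div_rpow_add_rpow {x y a : ℝ} (hy : 0 < y) (hyx : y < x) (ha : 1 < a) :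
    x / (x + y) < x ^ a / (x ^ a + y ^ a) := by
  have hx : 0 < x := hy.trans hyx
  have hr : 0 < y / x := div_pos hy hx
  have hr1 : y / x < 1 := (div_lt_one hx).2 hyx
  have h1 : x / (x + y) = (1 + y / x)⁻¹ := by
    simpa only [rpow_one] using rpow_div_rpow_add_rpow_eq_inv hx hy.le 1
  rw [h1, rpow_div_rpow_add_rpow_eq_inv hx hy.le]
  gcongr
  exact rpow_lt_self_of_lt_one hr hr1 ha

lemma tendsto_rpow_div_rpow_add_rpow_atTop {x y : ℝ} (hy : 0 ≤ y) (hyx : y < x) :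
    Tendsto (fun a : ℝ => x ^ a / (x ^ a + y ^ a)) atTop (nhds 1) := by
  have hx : 0 < x := hy.trans_lt hyx
  have hr : Tendsto (fun a : ℝ => (y / x) ^ a) atTop (nhds 0) :=
    tendsto_rpow_atTop_of_base_lt_one _ (by linarith [div_nonneg hy hx.le])
      ((div_lt_one hx).2 hyx)
  simp_rw [rpow_div_rpow_add_rpow_eq_inv hx hy]
  simpa using (hr.const_add 1).inv₀ (by norm_num)

end Real

theorem stmt_12_general (p : ℝ) (hp1 : p < 1) :
    let piOf : ℝ → ℝ := fun β => p ^ (1 / β) / (p ^ (1 / β) + (1 - p) ^ (1 / β))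
    (1 / 2 < p → ∀ β : ℝ, 0 < β → β < 1 → p < piOf β) ∧
    (1 / 2 < p → Tendsto piOf (nhdsWithin 0 (Set.Ioi 0)) (nhds 1)) := by
  intro piOf
  have hq : 0 < 1 - p := by linarith
  refine ⟨fun hp2 β hβ hβ1 => ?_, fun hp2 => ?_⟩
  · have ha : 1 < 1 / β := by rwa [lt_div_iff₀ hβ, one_mul]
    have h := div_add_lt_rpow_div_rpow_add_rpow (x := p) hq (by linarith) ha
    rwa [add_sub_cancel, div_one] at h
  · have hinv : Tendsto (fun β : ℝ => 1 / β) (nhdsWithin 0 (Set.Ioi 0)) atTop := by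
      simpa only [one_div] using tendsto_inv_nhdsGT_zero
    exact (tendsto_rpow_div_rpow_add_rpow_atTop hq.le (by linarith)).comp hinv

theorem stmt_12 (p : ℝ) (hp : 0 < p) (hp1 : p < 1) :
    let piOf : ℝ → ℝ := fun β => p ^ (1 / β) / (p ^ (1 / β) + (1 - p) ^ (1 / β))
    (1 / 2 < p → ∀ β : ℝ, 0 < β → β < 1 → p < piOf β) ∧
    (1 / 2 < p → Tendsto piOf (nhdsWithin 0 (Set.Ioi 0)) (nhds 1)) :=
  stmt_12_general p hp1
end

section
/- Let r ∈ ℝⁿ, q a positive probability distribution, and α, β > 0. Define for each distribution π the reparameterized reward r̂_π(i) = α log π(i) − β log q(i) + C for any constant C. If π*(i) = q(i)^{β/α} exp(r(i)/α)/Z is the SPL-optimal policy for reward r, then r̂_{π*}(i) − r̂_{π*}(j) = r(i) − r(j) for all i, j. -/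
/-!
The optimal policy is a Gibbs distribution `π* i = w i / Z` with weights
`w i = q i ^ (β / α) * exp (r i / α)`. Differences of `log π*` do not see the partition
function `Z`, and `α log w i = β log q i + r i`, so `r̂` recovers `r` up to a constant.
-/

open Real Finset

lemma Real.log_div_sum_sub_log_div_sum {ι : Type*} [Fintype ι] {w : ι → ℝ}
    (hw : ∀ k, 0 < w k) (i j : ι) :
    log (w i / ∑ k, w k) - log (w j / ∑ k, w k) = log (w i) - log (w j) := by
  have hZ : (∑ k, w k) ≠ 0 := (sum_pos (fun k _ => hw k) ⟨i, mem_univ i⟩).ne'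
  rw [log_div (hw i).ne' hZ, log_div (hw j).ne' hZ]
  ring

lemma Real.log_rpow_mul_exp {q : ℝ} (hq : 0 < q) (s x : ℝ) :
    log (q ^ s * exp x) = s * log q + x := by
  rw [log_mul (rpow_pos_of_pos hq s).ne' (exp_ne_zero x), log_rpow hq, log_exp]

theorem stmt_14_general (n : ℕ) (α β : ℝ) (hα : 0 < α) (r q : Fin n → ℝ)
    (hq : ∀ i, 0 < q i) (C : ℝ) :
    let Z : ℝ := ∑ j, q j ^ (β / α) * Real.exp (r j / α)
    let Pstar : Fin n → ℝ := fun i => q i ^ (β / α) * Real.exp (r i / α) / Z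
    let rhat : Fin n → ℝ := fun i => α * Real.log (Pstar i) - β * Real.log (q i) + C
    ∀ i j, rhat i - rhat j = r i - r j := by
  intro Z Pstar rhat i j
  have hw : ∀ k, 0 < q k ^ (β / α) * exp (r k / α) :=
    fun k => mul_pos (rpow_pos_of_pos (hq k) _) (exp_pos _)
  have hlog : log (Pstar i) - log (Pstar j) =
      (β / α * log (q i) + r i / α) - (β / α * log (q j) + r j / α) := by
    rw [← log_rpow_mul_exp (hq i), ← log_rpow_mul_exp (hq j)]
    exact log_div_sum_sub_log_div_sum hw i j
  calc rhat i - rhat j = α * (log (Pstar i) - log (Pstar j)) - β * (log (q i) - log (q j)) := by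
        ring
    _ = r i - r j := by
        rw [hlog]
        field_simp
        ring

theorem stmt_14 (n : ℕ) (α β : ℝ) (hα : 0 < α) (hβ : 0 < β) (r q : Fin n → ℝ)
    (hq : ∀ i, 0 < q i) (hq1 : ∑ i, q i = 1) (C : ℝ) :
    let Z : ℝ := ∑ j, q j ^ (β / α) * Real.exp (r j / α)
    let Pstar : Fin n → ℝ := fun i => q i ^ (β / α) * Real.exp (r i / α) / Z
    let rhat : Fin n → ℝ := fun i => α * Real.log (Pstar i) - β * Real.log (q i) + C
    ∀ i j, rhat i - rhat j = r i - r j :=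
  stmt_14_general n α β hα r q hq C
end

section
/- Token-level temperature scaling does not in general preserve sequence-probability ordering: there exists a two-token autoregressive distribution π over sequences and a temperature t > 1 such that some sequence y has π(y) > π(y') but the token-level temperature-scaled distribution π_t (scaling and renormalizing each conditional token distribution by exponent 1/t) satisfies π_t(y) < π_t(y'). -/
/-!
Take `t = 2` and make every probability a normalized square `a i ^ 2 / ∑ j, a j ^ 2`: tempering
each token distribution then replaces it by the normalized roots `a i / ∑ j, a j`. With first-token
weights `(3, 2)` and conditional weights `(1, 1)` after token `0`, `(4, 1)` after token `1`,
`π(0,0) = 9/26 > 64/221 = π(1,0)`, whereas the tempered probabilities are `3/10 < 8/25`: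
tempering flattens the first token much more than it flattens the peaked conditional after
token `1`.
-/

open Real Finset

section NormalizedWeights

variable {ι : Type*} [Fintype ι]

noncomputable def normalizedWeights (w : ι → ℝ) (i : ι) : ℝ := w i / ∑ j, w j

theorem sum_normalizedWeights {w : ι → ℝ} (hw : ∑ j, w j ≠ 0) :
    ∑ i, normalizedWeights w i = 1 := by
  simp only [normalizedWeights, ← Finset.sum_div, div_self hw]

variable [Nonempty ι]

theorem normalizedWeights_pos {w : ι → ℝ} (hw : ∀ i, 0 < w i) (i : ι) :
    0 < normalizedWeights w i :=
  div_pos (hw i) (Finset.sum_pos (fun j _ => hw j) Finset.univ_nonempty)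

theorem normalizedWeights_rpow_temper {w : ι → ℝ} {t : ℝ} (ht : t ≠ 0) (hw : ∀ i, 0 < w i)
    (i : ι) :
    normalizedWeights (fun j => w j ^ t) i ^ (1 / t) /
        ∑ j, normalizedWeights (fun j => w j ^ t) j ^ (1 / t) =
      normalizedWeights w i := by
  have hS : 0 < ∑ j, w j ^ t :=
    Finset.sum_pos (fun j _ => rpow_pos_of_pos (hw j) t) Finset.univ_nonempty
  have hroot (j : ι) : normalizedWeights (fun j => w j ^ t) j ^ (1 / t) =
      w j / (∑ k, w k ^ t) ^ (1 / t) := by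
    rw [normalizedWeights, div_rpow (rpow_nonneg (hw j).le t) hS.le, one_div,
      rpow_rpow_inv (hw j).le ht]
  simp only [hroot, ← Finset.sum_div]
  exact div_div_div_cancel_right₀ (rpow_pos_of_pos hS _).ne' _ _

end NormalizedWeights

theorem stmt_17 :
    ∃ (P1 : Fin 2 → ℝ) (P2 : Fin 2 → Fin 2 → ℝ) (t : ℝ),
      (∀ i, 0 < P1 i) ∧ (∑ i, P1 i = 1) ∧
      (∀ i j, 0 < P2 i j) ∧ (∀ i, ∑ j, P2 i j = 1) ∧ 1 < t ∧
      ∃ y y' : Fin 2 × Fin 2,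
        P1 y.1 * P2 y.1 y.2 > P1 y'.1 * P2 y'.1 y'.2 ∧
        (P1 y.1 ^ (1 / t) / ∑ i, P1 i ^ (1 / t)) *
            (P2 y.1 y.2 ^ (1 / t) / ∑ j, P2 y.1 j ^ (1 / t))
          < (P1 y'.1 ^ (1 / t) / ∑ i, P1 i ^ (1 / t)) *
            (P2 y'.1 y'.2 ^ (1 / t) / ∑ j, P2 y'.1 j ^ (1 / t)) := by
  set a : Fin 2 → ℝ := ![3, 2]
  set b : Fin 2 → Fin 2 → ℝ := ![![1, 1], ![4, 1]]
  have ha : ∀ i, 0 < a i := by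
    intro i; fin_cases i <;> norm_num [a]
  have hb : ∀ i j, 0 < b i j := by
    intro i j; fin_cases i <;> fin_cases j <;> norm_num [b]
  refine ⟨normalizedWeights (fun i => a i ^ (2 : ℝ)),
    fun i => normalizedWeights (fun j => b i j ^ (2 : ℝ)), 2,
    normalizedWeights_pos fun i => rpow_pos_of_pos (ha i) _,
    sum_normalizedWeights ?_,
    fun i => normalizedWeights_pos fun j => rpow_pos_of_pos (hb i j) _,
    fun i => sum_normalizedWeights ?_, one_lt_two, (0, 0), (1, 0), ?_, ?_⟩
  · exact (Finset.sum_pos (fun i _ => rpow_pos_of_pos (ha i) _) Finset.univ_nonempty).ne'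
  · exact (Finset.sum_pos (fun j _ => rpow_pos_of_pos (hb i j) _) Finset.univ_nonempty).ne'
  · norm_num [normalizedWeights, Fin.sum_univ_two, a, b]
  · simp only [normalizedWeights_rpow_temper two_ne_zero ha,
      normalizedWeights_rpow_temper two_ne_zero (hb _)]
    norm_num [normalizedWeights, Fin.sum_univ_two, a, b]
end
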